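/- arXiv:1709.05029 — 4 statements merged into one kernel-verified Lean document; each statement's English description precedes it below -/
import Mathlib

section
/- Let d ≥ 1 and let x_1, …, x_n be nonzero vectors in d-dimensional Euclidean space ℝ^d such that ⟪x_i, x_j⟫ < 0 for all i ≠ j. Then n ≤ d + 1. (Equivalently, the maximum number of nonzero vectors in ℝ^d with pairwise strictly negative inner products is d + 1.) -/
open scoped RealInnerProductSpace

open Finset in
lemma max_pairwise_neg_inner_key {E : Type*} [NormedAddCommGroup E]
    [InnerProductSpace ℝ E] {n : ℕ} (x : Fin n → E)
    (hneg : ∀ i j, i ≠ j → ⟪x i, x j⟫ < 0)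
    (g : Fin n → ℝ) (hsum : ∑ i, g i • x i = 0)
    (k : Fin n) (hk : g k = 0) (hP : ∃ i, 0 < g i) : False := by
  classical
  set P : Finset (Fin n) := univ.filter fun i => 0 < g i with hPdef
  set N : Finset (Fin n) := univ.filter fun i => g i < 0 with hNdef
  have hdisj : Disjoint P N := by
    simp only [Finset.disjoint_left, hPdef, hNdef, mem_filter, mem_univ, true_and]
    intro a ha; linarith
  have hPN : ∑ i ∈ P, g i • x i + ∑ i ∈ N, g i • x i = 0 := by
    rw [← Finset.sum_union hdisj]
    rw [← hsum]
    apply Finset.sum_subset (Finset.subset_univ _)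
    intro i _ hi
    simp only [Finset.mem_union, hPdef, hNdef, mem_filter, mem_univ, true_and,
      not_or, not_lt] at hi
    have : g i = 0 := le_antisymm hi.1 hi.2
    simp [this]
  set y : E := ∑ i ∈ P, g i • x i with hydef
  have hy : y = -∑ i ∈ N, g i • x i := by
    rw [eq_neg_iff_add_eq_zero]; exact hPN
  have hPne : P.Nonempty := by
    obtain ⟨i, hi⟩ := hP
    exact ⟨i, by simp [hPdef, hi]⟩
  have hkP : k ∉ P := by simp [hPdef, hk]
  by_cases hNe : N.Nonempty
  · -- ⟪y, y⟫ < 0, contradiction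
    have expand : ⟪y, y⟫ = ∑ i ∈ P, ∑ j ∈ N, g i * -(g j) * ⟪x i, x j⟫ := by
      conv_lhs => rw [show (⟪y, y⟫ : ℝ) = ⟪y, -∑ i ∈ N, g i • x i⟫ from by rw [← hy]]
      rw [inner_neg_right, hydef, sum_inner]
      rw [← Finset.sum_neg_distrib]
      refine Finset.sum_congr rfl fun i _ => ?_
      rw [inner_sum, ← Finset.sum_neg_distrib]
      refine Finset.sum_congr rfl fun j _ => ?_
      rw [real_inner_smul_left, real_inner_smul_right]
      ring
    have hlt : ⟪y, y⟫ < 0 := by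
      rw [expand]
      apply Finset.sum_neg _ hPne
      intro i hi
      apply Finset.sum_neg _ hNe
      intro j hj
      simp only [hPdef, hNdef, mem_filter, mem_univ, true_and] at hi hj
      have hij : i ≠ j := fun h => by rw [h] at hi; linarith
      have := hneg i j hij
      have h1 : 0 < g i * -(g j) := mul_pos hi (by linarith)
      exact mul_neg_of_pos_of_neg h1 this
    exact absurd (real_inner_self_nonneg (x := y)) (not_le.mpr hlt)
  · -- N empty, so y = 0; inner with x k gives contradiction
    rw [Finset.not_nonempty_iff_eq_empty] at hNe
    have hy0 : y = 0 := by rw [hy, hNe]; simp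
    have h0 : (0 : ℝ) = ∑ i ∈ P, g i * ⟪x k, x i⟫ := by
      have : ⟪x k, y⟫ = 0 := by rw [hy0, inner_zero_right]
      rw [hydef, inner_sum] at this
      rw [← this]
      exact Finset.sum_congr rfl fun i _ => real_inner_smul_right _ _ _
    have hlt : ∑ i ∈ P, g i * ⟪x k, x i⟫ < 0 := by
      apply Finset.sum_neg _ hPne
      intro i hi
      simp only [hPdef, mem_filter, mem_univ, true_and] at hi
      have hik : k ≠ i := fun h => hkP (by simpa [hPdef, h] using hi)
      exact mul_neg_of_pos_of_neg hi (hneg k i hik)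
    linarith [h0]

/-- At most `d + 1` nonzero vectors in `ℝ^d` can have pairwise strictly
negative inner products. -/
theorem max_pairwise_neg_inner (d n : ℕ) (hd : 1 ≤ d)
    (x : Fin n → EuclideanSpace ℝ (Fin d))
    (hx : ∀ i, x i ≠ 0)
    (hneg : ∀ i j, i ≠ j → ⟪x i, x j⟫ < 0) :
    n ≤ d + 1 := by
  by_contra hlt
  push_neg at hlt
  have hn : d + 2 ≤ n := hlt
  set v : Fin (d + 2) → EuclideanSpace ℝ (Fin d) := fun i => x (Fin.castLE hn i) with hvdef
  have hvneg : ∀ i j : Fin (d + 2), i ≠ j → ⟪v i, v j⟫ < 0 := by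
    intro i j hij
    exact hneg _ _ (fun h => hij (Fin.castLE_injective hn h))
  -- first d+1 vectors are linearly dependent
  have hdep : ¬ LinearIndependent ℝ (fun i : Fin (d + 1) => v (Fin.castSucc i)) := by
    intro hli
    have := hli.fintype_card_le_finrank
    simp [finrank_euclideanSpace_fin] at this
  rw [Fintype.not_linearIndependent_iff] at hdep
  obtain ⟨g', hg'sum, i₀, hi₀⟩ := hdep
  set g : Fin (d + 2) → ℝ := Fin.snoc g' 0 with hgdef
  have hgsum : ∑ i, g i • v i = 0 := by
    rw [Fin.sum_univ_castSucc]
    simp only [hgdef, Fin.snoc_castSucc, Fin.snoc_last]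
    simpa using hg'sum
  have hglast : g (Fin.last (d + 1)) = 0 := by simp [hgdef]
  have hgi₀ : g (Fin.castSucc i₀) = g' i₀ := by simp [hgdef]
  rcases lt_or_gt_of_ne hi₀ with h | h
  · -- g' i₀ < 0 : use -g
    refine max_pairwise_neg_inner_key v hvneg (-g) ?_ (Fin.last (d + 1)) (by simp [hglast]) ?_
    · simp only [Pi.neg_apply, neg_smul]
      rw [Finset.sum_neg_distrib, hgsum, neg_zero]
    · exact ⟨Fin.castSucc i₀, by rw [Pi.neg_apply, hgi₀]; linarith⟩
  · refine max_pairwise_neg_inner_key v hvneg g hgsum (Fin.last (d + 1)) hglast ?_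
    exact ⟨Fin.castSucc i₀, by rw [hgi₀]; exact h⟩
end

section
/- Let d ≥ 1 and let S be a finite set of unit vectors in ℝ^d such that ⟪x, y⟫ < 0 for all distinct x, y ∈ S, and such that S is a complete parking of radius r_c = √2, i.e. for every unit vector z ∈ ℝ^d there exists x ∈ S with ⟪z, x⟫ > 0. Then S has exactly d + 1 elements. (This is the deterministic core of the theorem that, with probability 1, a complete random parking of discs of critical radius on S^{d−1} contains exactly d + 1 points: almost surely no two points are exactly orthogonal, and any orthogonality-free complete parking at the critical radius has size exactly d + 1.) -/
open scoped RealInnerProductSpace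

/-- An orthogonality-free complete parking at the critical radius `√2` on
`S^{d-1}` has exactly `d + 1` points: if `S` is a finite set of unit vectors
in `ℝ^d` with pairwise strictly negative inner products such that every unit
vector has strictly positive inner product with some member of `S`, then
`S` has exactly `d + 1` elements. -/
theorem complete_parking_neg_inner_card (d : ℕ) (hd : 1 ≤ d)
    (S : Finset (EuclideanSpace ℝ (Fin d)))
    (hunit : ∀ x ∈ S, ‖x‖ = 1)
    (hneg : ∀ x ∈ S, ∀ y ∈ S, x ≠ y → ⟪x, y⟫ < 0)
    (hcomplete : ∀ z : EuclideanSpace ℝ (Fin d), ‖z‖ = 1 → ∃ x ∈ S, 0 < ⟪z, x⟫) :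
    S.card = d + 1 := by
  have hfr : Module.finrank ℝ (EuclideanSpace ℝ (Fin d)) = d := finrank_euclideanSpace_fin
  -- Step 0: every z with ⟪z,x⟫ ≤ 0 for all x ∈ S must be zero.
  have hkey : ∀ z : (EuclideanSpace ℝ (Fin d)), (∀ x ∈ S, ⟪z, x⟫ ≤ 0) → z = 0 := by
    intro z hz
    by_contra h0
    obtain ⟨x, hx, hpos⟩ := hcomplete (‖z‖⁻¹ • z) (norm_smul_inv_norm h0)
    have : ⟪(‖z‖⁻¹ • z : EuclideanSpace ℝ (Fin d)), x⟫ = ‖z‖⁻¹ * ⟪z, x⟫ := real_inner_smul_left z x _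
    nlinarith [hz x hx, inv_nonneg.mpr (norm_nonneg z), this ▸ hpos]
  -- Step 1: S spans ⊤.
  have hspan : Submodule.span ℝ (S : Set (EuclideanSpace ℝ (Fin d))) = ⊤ := by
    by_contra hne
    have : (Submodule.span ℝ (S : Set (EuclideanSpace ℝ (Fin d))))ᗮ ≠ ⊥ := by
      intro hbot
      exact hne (Submodule.orthogonal_eq_bot_iff.mp hbot)
    obtain ⟨z, hzmem, hz0⟩ := Submodule.exists_mem_ne_zero_of_ne_bot this
    refine hz0 (hkey z fun x hx => ?_)
    have := (Submodule.mem_orthogonal _ z).mp hzmem x (Submodule.subset_span hx)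
    rw [real_inner_comm] at this
    simp [this]
  -- Step 2: d ≤ S.card
  have hle : d ≤ S.card := by
    have := finrank_span_finset_le_card (R := ℝ) S
    rwa [Set.finrank, hspan, finrank_top, hfr] at this
  -- Step 3: S.card ≠ d
  have hne : S.card ≠ d := by
    intro hcard
    -- build linear map z ↦ (x ↦ ⟪x, z⟫)
    set Φ : (EuclideanSpace ℝ (Fin d)) →ₗ[ℝ] (S → ℝ) :=
      LinearMap.pi (fun x : S => ((innerSL ℝ (x : EuclideanSpace ℝ (Fin d))) : (EuclideanSpace ℝ (Fin d)) →ₗ[ℝ] ℝ)) with hΦ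
    have hinj : Function.Injective Φ := by
      rw [← LinearMap.ker_eq_bot]
      rw [Submodule.eq_bot_iff]
      intro z hz
      have hz' : ∀ x ∈ S, ⟪z, x⟫ = 0 := by
        intro x hx
        have h2 := congrFun (LinearMap.mem_ker.mp hz) ⟨x, hx⟩
        simp only [hΦ, LinearMap.pi_apply, ContinuousLinearMap.coe_coe, innerSL_apply_apply,
          Pi.zero_apply] at h2
        rw [real_inner_comm]
        exact h2
      exact hkey z (fun x hx => (hz' x hx).le)
    have hdim : Module.finrank ℝ (EuclideanSpace ℝ (Fin d)) = Module.finrank ℝ (S → ℝ) := by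
      rw [hfr, Module.finrank_fintype_fun_eq_card, Fintype.card_coe, hcard]
    have hsurj := (LinearMap.injective_iff_surjective_of_finrank_eq_finrank hdim).mp hinj
    obtain ⟨z, hz⟩ := hsurj (fun _ => (-1 : ℝ))
    have hz' : ∀ x ∈ S, ⟪z, x⟫ = -1 := by
      intro x hx
      have h2 := congrFun hz ⟨x, hx⟩
      simp only [hΦ, LinearMap.pi_apply, ContinuousLinearMap.coe_coe, innerSL_apply_apply] at h2
      rw [real_inner_comm]
      exact h2
    have hz0 : z = 0 := hkey z (fun x hx => by rw [hz' x hx]; norm_num)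
    -- S nonempty
    obtain ⟨x, hx, _⟩ := hcomplete (EuclideanSpace.single ⟨0, hd⟩ 1) (by simp)
    have := hz' x hx
    rw [hz0] at this
    simp at this
  -- Step 4: S.card ≤ d + 1
  have hub : S.card ≤ d + 1 := by
    classical
    by_contra hgt
    push_neg at hgt
    obtain ⟨x₀, hx₀⟩ := Finset.card_pos.mp (show 0 < S.card by omega)
    set T := S.erase x₀ with hT
    have hTcard : d < T.card := by
      rw [hT, Finset.card_erase_of_mem hx₀]; omega
    obtain ⟨f, hsum, x₁, hx₁, hfx₁⟩ :=
      Module.exists_nontrivial_relation_of_finrank_lt_card (R := ℝ) (by rw [hfr]; exact hTcard)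
    have hTS : ∀ x ∈ T, x ∈ S := fun x hx => Finset.mem_of_mem_erase hx
    set P := T.filter (fun x => 0 < f x) with hP
    set N := T.filter (fun x => f x < 0) with hN
    have hPN : Disjoint P N := by
      simp only [hP, hN, Finset.disjoint_filter]
      intro x _ h1; linarith
    have hsplit : ∑ x ∈ P, f x • x + ∑ x ∈ N, f x • x = 0 := by
      rw [← Finset.sum_union hPN, ← hsum]
      apply Finset.sum_subset
      · intro x hx
        rcases Finset.mem_union.mp hx with h | h
        · exact Finset.mem_of_mem_filter x h
        · exact Finset.mem_of_mem_filter x h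
      · intro x hx hx'
        have : f x = 0 := by
          by_contra h
          rcases lt_or_gt_of_ne h with h | h
          · exact hx' (Finset.mem_union_right _ (Finset.mem_filter.mpr ⟨hx, h⟩))
          · exact hx' (Finset.mem_union_left _ (Finset.mem_filter.mpr ⟨hx, h⟩))
        simp [this]
    have hx₁PN : x₁ ∈ P ∪ N := by
      rcases lt_or_gt_of_ne hfx₁ with h | h
      · exact Finset.mem_union_right _ (Finset.mem_filter.mpr ⟨hx₁, h⟩)
      · exact Finset.mem_union_left _ (Finset.mem_filter.mpr ⟨hx₁, h⟩)
    have hinnerP : ∀ v : (EuclideanSpace ℝ (Fin d)), ⟪∑ x ∈ P, f x • x, v⟫ = ∑ x ∈ P, f x * ⟪x, v⟫ := by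
      intro v
      rw [sum_inner]
      exact Finset.sum_congr rfl fun x _ => real_inner_smul_left x v (f x)
    have hinnerN : ∀ v : (EuclideanSpace ℝ (Fin d)), ⟪∑ x ∈ N, f x • x, v⟫ = ∑ x ∈ N, f x * ⟪x, v⟫ := by
      intro v
      rw [sum_inner]
      exact Finset.sum_congr rfl fun x _ => real_inner_smul_left x v (f x)
    rcases Finset.eq_empty_or_nonempty N with hNe | hNne
    · -- N empty: sum over P is zero, inner with x₀ gives contradiction
      have hPne : P.Nonempty := by
        rcases Finset.mem_union.mp hx₁PN with h | h
        · exact ⟨x₁, h⟩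
        · rw [hNe] at h; simp at h
      have hzero : ∑ x ∈ P, f x • x = (0 : EuclideanSpace ℝ (Fin d)) := by
        rw [hNe] at hsplit; simpa using hsplit
      have := hinnerP x₀
      rw [hzero, inner_zero_left] at this
      have hposum : (0 : ℝ) < ∑ x ∈ P, -(f x * ⟪x, x₀⟫) := by
        apply Finset.sum_pos _ hPne
        intro x hx
        obtain ⟨hxT, hfx⟩ := Finset.mem_filter.mp hx
        have hxne : x ≠ x₀ := Finset.ne_of_mem_erase hxT
        have := hneg x (hTS x hxT) x₀ hx₀ hxne
        nlinarith
      rw [Finset.sum_neg_distrib, ← this] at hposum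
      linarith
    · rcases Finset.eq_empty_or_nonempty P with hPe | hPne
      · -- P empty
        have hzero : ∑ x ∈ N, f x • x = (0 : EuclideanSpace ℝ (Fin d)) := by
          rw [hPe] at hsplit; simpa using hsplit
        have := hinnerN x₀
        rw [hzero, inner_zero_left] at this
        have hposum : (0 : ℝ) < ∑ x ∈ N, f x * ⟪x, x₀⟫ := by
          apply Finset.sum_pos _ hNne
          intro x hx
          obtain ⟨hxT, hfx⟩ := Finset.mem_filter.mp hx
          have hxne : x ≠ x₀ := Finset.ne_of_mem_erase hxT
          have := hneg x (hTS x hxT) x₀ hx₀ hxne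
          nlinarith
        linarith
      · -- both nonempty
        set w : (EuclideanSpace ℝ (Fin d)) := ∑ x ∈ P, f x • x with hw
        have hwneg : w = -∑ x ∈ N, f x • x := by
          rw [hw]; linear_combination (norm := module) hsplit
        have hww : ⟪w, w⟫ = -∑ x ∈ P, ∑ y ∈ N, f x * (f y * ⟪x, y⟫) := by
          nth_rewrite 2 [hwneg]
          rw [inner_neg_right, hinnerP]
          congr 1
          apply Finset.sum_congr rfl
          intro x hx
          rw [inner_sum, Finset.mul_sum]
          apply Finset.sum_congr rfl
          intro y hy
          rw [real_inner_smul_right]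
        have hsumneg : 0 < ∑ x ∈ P, ∑ y ∈ N, f x * (f y * ⟪x, y⟫) := by
          apply Finset.sum_pos _ hPne
          intro x hx
          apply Finset.sum_pos _ hNne
          intro y hy
          obtain ⟨hxT, hfx⟩ := Finset.mem_filter.mp hx
          obtain ⟨hyT, hfy⟩ := Finset.mem_filter.mp hy
          have hxy : x ≠ y := by
            intro h
            rw [h] at hfx; linarith
          have hin := hneg x (hTS x hxT) y (hTS y hyT) hxy
          have h1 : 0 < f y * ⟪x, y⟫ := mul_pos_of_neg_of_neg hfy hin
          have := mul_pos hfx h1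
          linarith
        have := real_inner_self_nonneg (x := w)
        linarith
  omega
end

section
/- Let d ≥ 1 and let z_1, …, z_n be nonzero vectors in ℝ^d such that ⟪z_i, z_j⟫ < 0 for all i ≠ j, and suppose the collection is maximal in the sense that for every nonzero vector w ∈ ℝ^d there exists an index i with ⟪w, z_i⟫ > 0. Then n = d + 1. (Equivalently: if one chooses points in ℝ^d one at a time, requiring all pairwise dot products to be nonpositive, and no two chosen points are exactly orthogonal, then the process must stop after exactly d + 1 points; the distances of the points from the origin are irrelevant.) -/
open scoped RealInnerProductSpace
open Finset

/-!
Vectors with pairwise negative inner products which all have negative inner product with one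
further vector `u` are linearly independent: if `∑ gᵢ vᵢ = 0`, the positive part `P` of the
combination equals minus its nonpositive part, so `⟪P, P⟫ ≤ 0` and `P = 0`; pairing with `u` then
shows that no coefficient is positive. Taking `u` to be one of the `z i`, the others are linearly
independent, so `n ≤ d + 1`. Conversely, if `n ≤ d` then either the map `w ↦ (⟪z i, w⟫)ᵢ` has a
nonzero kernel, or it is onto `ℝⁿ` and some `w` has `⟪z i, w⟫ = -1` for all `i`; either way `w`
violates maximality.
-/

section

variable {E : Type*} [NormedAddCommGroup E] [InnerProductSpace ℝ E]

theorem nonpos_of_sum_smul_eq_zero_of_pairwise_inner_neg {ι : Type*} [Fintype ι]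
    {v : ι → E} {u : E} (hneg : Pairwise fun i j => ⟪v i, v j⟫ < 0)
    (hu : ∀ i, ⟪v i, u⟫ < 0) {g : ι → ℝ} (hg : ∑ i, g i • v i = 0) (i : ι) :
    g i ≤ 0 := by
  set s := univ.filter fun i => 0 < g i
  set P := ∑ i ∈ s, g i • v i
  have hP : P = -∑ j ∈ univ.filter (fun j => ¬ 0 < g j), g j • v j := by
    rw [eq_neg_iff_add_eq_zero, sum_filter_add_sum_filter_not, hg]
  -- `⟪P, P⟫ = -∑_{gᵢ > 0, gⱼ ≤ 0} gᵢ gⱼ ⟪vᵢ, vⱼ⟫`, a sum of terms with `i ≠ j`.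
  have hPP : ⟪P, P⟫ ≤ 0 := by
    rw [show ⟪P, P⟫ = ⟪P, _⟫ from congrArg (inner ℝ P) hP, inner_neg_right, neg_nonpos, sum_inner]
    refine sum_nonneg fun i hi => ?_
    rw [inner_sum]
    refine sum_nonneg fun j hj => ?_
    simp only [s, mem_filter, mem_univ, true_and] at hi hj
    rw [real_inner_smul_left, real_inner_smul_right]
    have := hneg (show i ≠ j by rintro rfl; exact hj hi)
    nlinarith [mul_nonneg_of_nonpos_of_nonpos (not_lt.mp hj) this.le]
  have hP0 : P = 0 := real_inner_self_nonpos.mp hPP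
  have hs : s = ∅ := by
    by_contra hs
    have : ⟪P, u⟫ < 0 := by
      rw [sum_inner]
      refine sum_neg (fun i hi => ?_) (nonempty_iff_ne_empty.mpr hs)
      rw [real_inner_smul_left]
      exact mul_neg_of_pos_of_neg (mem_filter.mp hi).2 (hu i)
    simp [hP0] at this
  by_contra hgi
  have : i ∈ s := mem_filter.mpr ⟨mem_univ i, not_le.mp hgi⟩
  simp [hs] at this

theorem linearIndependent_of_pairwise_inner_neg {ι : Type*} [Fintype ι]
    {v : ι → E} {u : E} (hneg : Pairwise fun i j => ⟪v i, v j⟫ < 0)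
    (hu : ∀ i, ⟪v i, u⟫ < 0) : LinearIndependent ℝ v := by
  rw [Fintype.linearIndependent_iff]
  intro g hg i
  have hg' : ∑ i, (-g) i • v i = 0 := by simp [neg_smul, sum_neg_distrib, hg]
  exact le_antisymm (nonpos_of_sum_smul_eq_zero_of_pairwise_inner_neg hneg hu hg i)
    (neg_nonpos.mp (nonpos_of_sum_smul_eq_zero_of_pairwise_inner_neg hneg hu hg' i))

theorem card_le_finrank_add_one_of_pairwise_inner_neg [FiniteDimensional ℝ E]
    {ι : Type*} [Fintype ι] {v : ι → E} (hneg : Pairwise fun i j => ⟪v i, v j⟫ < 0) :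
    Fintype.card ι ≤ Module.finrank ℝ E + 1 := by
  classical
  rcases isEmpty_or_nonempty ι with hι | ⟨⟨i₀⟩⟩
  · simp
  have hli : LinearIndependent ℝ fun i : {i // i ≠ i₀} => v i :=
    linearIndependent_of_pairwise_inner_neg (u := v i₀)
      (fun i j hij => hneg (Subtype.coe_injective.ne hij)) fun i => hneg i.2
  have := hli.fintype_card_le_finrank
  rw [Fintype.card_subtype_compl, Fintype.card_subtype_eq] at this
  omega

theorem exists_ne_zero_forall_inner_nonpos [FiniteDimensional ℝ E] {n : ℕ}
    (hE : 0 < Module.finrank ℝ E) (hn : n ≤ Module.finrank ℝ E) (v : Fin n → E) :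
    ∃ w ≠ 0, ∀ i, ⟪v i, w⟫ ≤ 0 := by
  let T : E →ₗ[ℝ] Fin n → ℝ := LinearMap.pi fun i => innerₗ E (v i)
  have hT : ∀ w i, T w i = ⟪v i, w⟫ := fun _ _ => rfl
  by_cases hinj : Function.Injective T
  · have hrank : Module.finrank ℝ E = Module.finrank ℝ (Fin n → ℝ) := by
      have := LinearMap.finrank_le_finrank_of_injective hinj
      simp only [Module.finrank_fin_fun] at this ⊢
      omega
    obtain ⟨w, hw⟩ := (LinearMap.injective_iff_surjective_of_finrank_eq_finrank hrank).mp hinj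
      fun _ => -1
    have : 0 < n := by simp at hrank; omega
    refine ⟨w, ?_, fun i => by rw [← hT, hw]; norm_num⟩
    rintro rfl
    simpa using congrFun hw ⟨0, this⟩
  · obtain ⟨w, hTw, hw⟩ : ∃ w, T w = 0 ∧ w ≠ 0 := by
      simpa [injective_iff_map_eq_zero, and_comm] using hinj
    exact ⟨w, hw, fun i => by rw [← hT, hTw]; rfl⟩

end

theorem maximal_pairwise_neg_inner_card_general (d n : ℕ) (hd : 1 ≤ d)
    (z : Fin n → EuclideanSpace ℝ (Fin d))
    (hneg : ∀ i j, i ≠ j → ⟪z i, z j⟫ < 0)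
    (hmax : ∀ w : EuclideanSpace ℝ (Fin d), w ≠ 0 → ∃ i, 0 < ⟪w, z i⟫) :
    n = d + 1 := by
  have hfinrank : Module.finrank ℝ (EuclideanSpace ℝ (Fin d)) = d := finrank_euclideanSpace_fin
  have hle : n ≤ d + 1 := by
    simpa [hfinrank] using card_le_finrank_add_one_of_pairwise_inner_neg (v := z) hneg
  by_contra hne
  obtain ⟨w, hw, hwz⟩ := exists_ne_zero_forall_inner_nonpos (v := z)
    (by omega) (by omega)
  obtain ⟨i, hi⟩ := hmax w hw
  linarith [hwz i, real_inner_comm w (z i)]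

/-- If `z_1, …, z_n` are nonzero vectors in `ℝ^d` with pairwise strictly
negative inner products, and the collection is maximal in the sense that every
nonzero vector has a strictly positive inner product with some `z i`, then
`n = d + 1`. -/
theorem maximal_pairwise_neg_inner_card (d n : ℕ) (hd : 1 ≤ d)
    (z : Fin n → EuclideanSpace ℝ (Fin d))
    (hz : ∀ i, z i ≠ 0)
    (hneg : ∀ i j, i ≠ j → ⟪z i, z j⟫ < 0)
    (hmax : ∀ w : EuclideanSpace ℝ (Fin d), w ≠ 0 → ∃ i, 0 < ⟪w, z i⟫) :
    n = d + 1 :=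
  maximal_pairwise_neg_inner_card_general d n hd z hneg hmax
end

section
/- Let d ≥ 2 and let a, b ∈ ℝ^d be vectors whose d-th coordinates satisfy a_d ≤ u and b_d ≤ u for some real number u < 0. Let Pa and Pb be the vectors obtained from a and b by replacing their d-th coordinates with u. If ⟪Pa, Pb⟫ ≥ 0, then ⟪a, b⟫ ≥ ⟪Pa, Pb⟫ ≥ 0; in particular a and b do not have strictly negative inner product. (This is the projection inequality underlying the inductive proofs of the bounds M_d(r) ≤ d + 1 for r > √2 and M_d(√2) ≤ 2d.) -/
open scoped RealInnerProductSpace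

/-! The projection changes only the `i`-th summand of the inner product, from `a i * b i` to
`u * u`, and `u * u ≤ a i * b i` because both factors are at most `u < 0`. -/

theorem EuclideanSpace.inner_sub_mul_apply_eq_of_apply_eq_of_ne {ι : Type*} [Fintype ι]
    [DecidableEq ι] (i : ι) {a b a' b' : EuclideanSpace ℝ ι}
    (ha : ∀ j ≠ i, a' j = a j) (hb : ∀ j ≠ i, b' j = b j) :
    ⟪a, b⟫ - a i * b i = ⟪a', b'⟫ - a' i * b' i := by
  simp only [PiLp.inner_apply, RCLike.inner_apply, conj_trivial,
    ← Finset.add_sum_erase _ _ (Finset.mem_univ i)]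
  rw [Finset.sum_congr rfl fun j hj => by
    rw [← ha j (Finset.ne_of_mem_erase hj), ← hb j (Finset.ne_of_mem_erase hj)]]
  ring

theorem projection_inner_ineq_general (d : ℕ)
    (i : Fin d)
    (u : ℝ) (hu : u < 0)
    (a b Pa Pb : EuclideanSpace ℝ (Fin d))
    (had : a i ≤ u) (hbd : b i ≤ u)
    (hPa : ∀ j, Pa j = if j = i then u else a j)
    (hPb : ∀ j, Pb j = if j = i then u else b j)
    (h : 0 ≤ ⟪Pa, Pb⟫) :
    ⟪Pa, Pb⟫ ≤ ⟪a, b⟫ ∧ 0 ≤ ⟪a, b⟫ ∧ ¬ ⟪a, b⟫ < 0 := by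
  have hsplit : ⟪a, b⟫ - a i * b i = ⟪Pa, Pb⟫ - u * u := by
    simpa [hPa i, hPb i] using
      EuclideanSpace.inner_sub_mul_apply_eq_of_apply_eq_of_ne (a' := Pa) (b' := Pb) i
        (fun j hj => by simp [hPa, hj]) (fun j hj => by simp [hPb, hj])
  have hprod : u * u ≤ a i * b i :=
    mul_le_mul_of_nonpos_of_nonpos had hbd (had.trans hu.le) hu.le
  have hle : ⟪Pa, Pb⟫ ≤ ⟪a, b⟫ := by linarith
  exact ⟨hle, h.trans hle, not_lt.mpr (h.trans hle)⟩

/-- Projection inequality: if the `d`-th coordinates of `a, b ∈ ℝ^d` are at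
most `u < 0`, and `Pa, Pb` are obtained from `a, b` by replacing the `d`-th
coordinate with `u`, then `⟪Pa, Pb⟫ ≥ 0` implies
`⟪a, b⟫ ≥ ⟪Pa, Pb⟫ ≥ 0`; in particular `a` and `b` do not have strictly
negative inner product. -/
theorem projection_inner_ineq (d : ℕ) (hd : 2 ≤ d)
    (i : Fin d) (hi : (i : ℕ) = d - 1)
    (u : ℝ) (hu : u < 0)
    (a b Pa Pb : EuclideanSpace ℝ (Fin d))
    (had : a i ≤ u) (hbd : b i ≤ u)
    (hPa : ∀ j, Pa j = if j = i then u else a j)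
    (hPb : ∀ j, Pb j = if j = i then u else b j)
    (h : 0 ≤ ⟪Pa, Pb⟫) :
    ⟪Pa, Pb⟫ ≤ ⟪a, b⟫ ∧ 0 ≤ ⟪a, b⟫ ∧ ¬ ⟪a, b⟫ < 0 :=
  projection_inner_ineq_general d i u hu a b Pa Pb had hbd hPa hPb h
end
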